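/- Let X be an irreducible shift space over finite alphabet A such that every word of L(X) of length ≥ m is neutral. Then for every w ∈ L(X) with |w| ≥ m, the set of right return words R_X(w) is finite and |R_X(w)| = 1 + Σ_{v ∈ L_m(X)} (r(v) - 1). In particular, if every word is neutral (m = 0), then |R_X(w)| = |A| for every w ∈ L(X). -/

import Mathlib

/-- `L` is factorial: factors of its elements belong to it. -/
def Factorial {A : Type*} (L : Set (List A)) : Prop :=
  ∀ u v : List A, u ++ v ∈ L → u ∈ L ∧ v ∈ L

/-- `L` is (bi)extendable: every word extends by a letter on both sides. -/
def Extendable {A : Type*} (L : Set (List A)) : Prop :=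
  ∀ w ∈ L, ∃ a b : A, a :: (w ++ [b]) ∈ L

/-- number of one-letter left extensions `ℓ(w)`. -/
noncomputable def lcount {A : Type*} (L : Set (List A)) (w : List A) : ℕ :=
  Set.ncard {a : A | a :: w ∈ L}

/-- number of one-letter right extensions `r(w)`. -/
noncomputable def rcount {A : Type*} (L : Set (List A)) (w : List A) : ℕ :=
  Set.ncard {b : A | w ++ [b] ∈ L}

/-- number of one-letter bi-extensions `e(w)`. -/
noncomputable def ecount {A : Type*} (L : Set (List A)) (w : List A) : ℕ :=
  Set.ncard {p : A × A | p.1 :: (w ++ [p.2]) ∈ L}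

/-- The set of positions at which `w` occurs as a factor of `v`. -/
def occSet {A : Type*} (w v : List A) : Set ℕ :=
  {i | i + w.length ≤ v.length ∧ w <+: v.drop i}

/-- `v` is a complete return word to `w` in `L`: `v ∈ L` has exactly two
occurrences of `w`, one as a proper prefix and one as a proper suffix. -/
def IsCompleteReturn {A : Type*} (L : Set (List A)) (w v : List A) : Prop :=
  v ∈ L ∧ w <+: v ∧ w <:+ v ∧ w.length < v.length ∧ Set.ncard (occSet w v) = 2

/-- The set of (right) return words to `w` in `L`. -/
def retWords {A : Type*} (L : Set (List A)) (w : List A) : Set (List A) :=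
  {u | IsCompleteReturn L w (w ++ u)}


/-!
Call a word of `L` *pending* (`prefixOnly L w`) if `w` occurs in it only as a prefix. Each
pending word `u` has `r(u)` one-letter right extensions in `L`, and each of them is either pending
or a complete return word: the complete returns are the leaves of the tree of pending words.
Dually, neutrality of a word `v` of length `≥ m` says `r(v) - 1 = ∑_{av ∈ L} (r(av) - 1)`, so
the weight `r(v) - 1` of a word avoiding `w` is handed down to its left extensions, each of which
avoids `w` or is pending. Hence the potential

  `Ψ(k) = ∑_{u pending, |u| = k} r(u) + ∑_{v avoids w, |v| = k} (r(v) - 1)`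
         `+ #{complete returns of length ≤ k}`

is constant for `k ≥ |w|`, equal to `Ψ(|w|) = 1 + ∑_{v ∈ L_{|w|}} (r(v) - 1)`, and the same
neutrality identity shows that this sum does not change between lengths `m` and `|w|`.
Thus there are finitely many complete returns. By irreducibility there are no pending words longer
than all complete returns (a pending `u` extends to `usw ∈ L`, which must return to `w` first) and
then no long words avoiding `w` (`wsv ∈ L` has a pending suffix longer than `v`), so for large `k`
the potential counts exactly the complete returns.
-/

open Set

theorem Set.sdiff_singleton_eq_singleton_iff {α : Type*} {s : Set α} {a b : α} (hab : a ≠ b) :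
    s \ {b} = {a} ↔ s = {a} ∨ s = {a, b} := by
  constructor
  · intro h
    by_cases hb : b ∈ s
    · right
      rw [← insert_eq_of_mem hb, ← insert_sdiff_singleton, h, pair_comm]
    · left
      rwa [sdiff_singleton_eq_self hb] at h
  · rintro (rfl | rfl)
    · exact sdiff_singleton_eq_self (by simpa using hab.symm)
    · simp [hab]

section

variable {A : Type*} {L : Set (List A)} {w : List A}

def layer (S : Set (List A)) (k : ℕ) : Set (List A) := {v | v ∈ S ∧ v.length = k}

def avoiding (L : Set (List A)) (w : List A) : Set (List A) := {v | v ∈ L ∧ occSet w v = ∅}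

def prefixOnly (L : Set (List A)) (w : List A) : Set (List A) := {u | u ∈ L ∧ occSet w u = {0}}

def completeReturns (L : Set (List A)) (w : List A) : Set (List A) := {z | IsCompleteReturn L w z}

def leftExt (L : Set (List A)) (v : List A) : Set (List A) := (· :: v) '' {a | a :: v ∈ L}

def rightExt (L : Set (List A)) (u : List A) : Set (List A) := (u ++ [·]) '' {b | u ++ [b] ∈ L}

theorem layer_finite [Finite A] (S : Set (List A)) (k : ℕ) : (layer S k).Finite :=
  (List.finite_length_eq A k).subset fun _ hv => hv.2

theorem occSet_finite (w v : List A) : (occSet w v).Finite :=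
  (finite_Iic v.length).subset fun _ hi => (Nat.le_add_right _ _).trans hi.1

theorem zero_mem_occSet_iff {v : List A} : 0 ∈ occSet w v ↔ w <+: v :=
  ⟨fun h => by simpa using h.2, fun h => ⟨by simpa using h.length_le, by simpa using h⟩⟩

theorem succ_mem_occSet_cons {v : List A} {a : A} {i : ℕ} :
    i + 1 ∈ occSet w (a :: v) ↔ i ∈ occSet w v := by
  simp only [occSet, mem_ofPred_eq, List.length_cons, List.drop_succ_cons]
  exact and_congr_left' (by omega)

theorem mem_occSet_drop {x : List A} {i j : ℕ} (hj : j ≤ x.length) :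
    i ∈ occSet w (x.drop j) ↔ j + i ∈ occSet w x := by
  simp only [occSet, mem_ofPred_eq, List.length_drop, List.drop_drop]
  exact and_congr_left' (by omega)

theorem occSet_of_prefix {p x : List A} (hp : p <+: x) :
    occSet w p = {i | i ∈ occSet w x ∧ i + w.length ≤ p.length} := by
  ext i
  constructor
  · rintro ⟨hi, hw⟩
    exact ⟨⟨hi.trans hp.length_le, hw.trans (hp.drop i)⟩, hi⟩
  · rintro ⟨⟨-, hw⟩, hi⟩
    exact ⟨hi, List.prefix_of_prefix_length_le hw (hp.drop i) (by simp; omega)⟩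

theorem occSet_dropLast {z : List A} (hz : z ≠ []) :
    occSet w z.dropLast = occSet w z \ {z.length - w.length} := by
  rw [occSet_of_prefix (List.dropLast_prefix z), List.length_dropLast]
  ext i
  have := List.length_pos_of_ne_nil hz
  simp only [mem_ofPred_eq, mem_sdiff, mem_singleton_iff]
  exact and_congr_right fun hi => by have := hi.1; omega

theorem occSet_subset_zero_of_length_le {v : List A} (h : v.length ≤ w.length) :
    occSet w v ⊆ {0} := fun i hi => by
  have := hi.1
  simp only [mem_singleton_iff]
  omega

theorem occSet_eq_empty_iff_cons {v : List A} {a : A} :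
    occSet w v = ∅ ↔ occSet w (a :: v) ⊆ {0} := by
  constructor
  · rintro h (_ | i) hi
    · rfl
    · rw [succ_mem_occSet_cons, h] at hi
      exact hi.elim
  · intro h
    refine eq_empty_of_forall_notMem fun i hi => ?_
    simpa using h (succ_mem_occSet_cons.mpr hi)

theorem Factorial.mem_of_prefix (hfac : Factorial L) {p x : List A} (hp : p <+: x)
    (hx : x ∈ L) : p ∈ L := by
  obtain ⟨t, rfl⟩ := hp
  exact (hfac p t hx).1

theorem Factorial.mem_of_suffix (hfac : Factorial L) {s x : List A} (hs : s <:+ x)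
    (hx : x ∈ L) : s ∈ L := by
  obtain ⟨t, rfl⟩ := hs
  exact (hfac t s hx).2

theorem Extendable.one_le_rcount [Finite A] (hfac : Factorial L) (hext : Extendable L)
    {v : List A} (hv : v ∈ L) : 1 ≤ rcount L v := by
  obtain ⟨a, b, hab⟩ := hext v hv
  refine (ncard_pos (toFinite _)).mpr ⟨b, ?_⟩
  exact hfac.mem_of_suffix ⟨[a], rfl⟩ hab

theorem Factorial.rcount_eq_zero (hfac : Factorial L) {v : List A} (hv : v ∉ L) :
    rcount L v = 0 := by
  have : {b | v ++ [b] ∈ L} = ∅ :=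
    eq_empty_of_forall_notMem fun b hb => hv (hfac.mem_of_prefix ⟨[b], rfl⟩ hb)
  rw [rcount, this, ncard_empty]

theorem isCompleteReturn_iff {z : List A} :
    IsCompleteReturn L w z ↔
      z ∈ L ∧ w.length < z.length ∧ occSet w z = {0, z.length - w.length} := by
  constructor
  · rintro ⟨hz, hpre, hsuf, hlen, hcard⟩
    refine ⟨hz, hlen, ?_⟩
    have hsub : {0, z.length - w.length} ⊆ occSet w z := by
      rintro i (rfl | rfl)
      · exact zero_mem_occSet_iff.mpr hpre
      · exact ⟨by omega, List.suffix_iff_eq_drop.mp hsuf ▸ List.prefix_rfl⟩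
    exact (eq_of_subset_of_ncard_le hsub (by rw [hcard, ncard_pair (by omega)])
      (occSet_finite w z)).symm
  · rintro ⟨hz, hlen, hocc⟩
    have hend : z.length - w.length ∈ occSet w z := by rw [hocc]; simp
    refine ⟨hz, zero_mem_occSet_iff.mp (by rw [hocc]; simp),
      List.suffix_iff_eq_drop.mpr (hend.2.eq_of_length (by simp; omega)), hlen, ?_⟩
    rw [hocc, ncard_pair (by omega)]

theorem prefix_of_mem_prefixOnly {u : List A} (hu : u ∈ prefixOnly L w) : w <+: u :=
  zero_mem_occSet_iff.mp (hu.2 ▸ rfl)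

theorem self_mem_prefixOnly (hw : w ∈ L) : w ∈ prefixOnly L w :=
  ⟨hw, (occSet_subset_zero_of_length_le le_rfl).antisymm
    (singleton_subset_iff.mpr (zero_mem_occSet_iff.mpr List.prefix_rfl))⟩

theorem disjoint_prefixOnly_avoiding : Disjoint (prefixOnly L w) (avoiding L w) :=
  disjoint_left.mpr fun _ hu hv => by simpa [hv.2] using hu.2

theorem disjoint_prefixOnly_completeReturns :
    Disjoint (prefixOnly L w) (completeReturns L w) := by
  refine disjoint_left.mpr fun z hu hz => ?_
  obtain ⟨-, hlen, hocc⟩ := isCompleteReturn_iff.mp hz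
  have : z.length - w.length ∈ occSet w z := by rw [hocc]; simp
  rw [hu.2, mem_singleton_iff] at this
  omega

theorem layer_subset (S : Set (List A)) (k : ℕ) : layer S k ⊆ S := fun _ hv => hv.1

theorem dropLast_mem_prefixOnly_iff (hfac : Factorial L) {z : List A} (hz : z ∈ L)
    (hlen : w.length < z.length) :
    z.dropLast ∈ prefixOnly L w ↔ z ∈ prefixOnly L w ∨ z ∈ completeReturns L w := by
  have hne : z ≠ [] := List.ne_nil_of_length_pos (by omega)
  simp only [prefixOnly, completeReturns, mem_ofPred_eq, isCompleteReturn_iff,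
    occSet_dropLast hne, hfac.mem_of_prefix (List.dropLast_prefix z) hz, hz, hlen, true_and]
  exact sdiff_singleton_eq_singleton_iff (by omega)

theorem mem_biUnion_rightExt {T : Set (List A)} {z : List A} :
    z ∈ ⋃ u ∈ T, rightExt L u ↔ z ∈ L ∧ z ≠ [] ∧ z.dropLast ∈ T := by
  simp only [rightExt, mem_iUnion, mem_image, mem_ofPred_eq, exists_prop]
  constructor
  · rintro ⟨u, hu, b, hb, rfl⟩
    exact ⟨hb, by simp, by simpa using hu⟩
  · rintro ⟨hz, hne, hd⟩
    exact ⟨_, hd, _, (List.dropLast_append_getLast hne).symm ▸ hz,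
      List.dropLast_append_getLast hne⟩

theorem mem_biUnion_leftExt {T : Set (List A)} {z : List A} :
    z ∈ ⋃ v ∈ T, leftExt L v ↔ z ∈ L ∧ z ≠ [] ∧ z.tail ∈ T := by
  simp only [leftExt, mem_iUnion, mem_image, mem_ofPred_eq, exists_prop]
  constructor
  · rintro ⟨v, hv, a, ha, rfl⟩
    exact ⟨ha, by simp, hv⟩
  · rintro ⟨hz, hne, ht⟩
    obtain ⟨a, v, rfl⟩ := List.exists_cons_of_ne_nil hne
    exact ⟨v, ht, a, hz, rfl⟩

theorem ncard_biUnion_rightExt [Finite A] {T : Set (List A)} (hT : T.Finite) :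
    (⋃ u ∈ T, rightExt L u).ncard = ∑ᶠ u ∈ T, rcount L u := by
  rw [hT.ncard_biUnion (s := rightExt L) fun u _ => (toFinite _).image _]
  · exact finsum_mem_congr rfl fun u _ =>
      ncard_image_of_injective _ fun b c h => by simpa using h
  · intro u _ u' _ hne
    rw [Function.onFun, disjoint_left]
    rintro _ ⟨b, -, rfl⟩ ⟨c, -, h⟩
    exact hne (List.append_inj' h rfl).1.symm

theorem finsum_mem_biUnion_leftExt [Finite A] {M : Type*} [AddCommMonoid M]
    {T : Set (List A)} (hT : T.Finite) (f : List A → M) :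
    ∑ᶠ z ∈ ⋃ v ∈ T, leftExt L v, f z = ∑ᶠ v ∈ T, ∑ᶠ a ∈ {a | a :: v ∈ L}, f (a :: v) := by
  rw [finsum_mem_biUnion (t := leftExt L) ?_ hT fun v _ => (toFinite _).image _]
  · exact finsum_mem_congr rfl fun v _ =>
      finsum_mem_image fun a _ b _ h => (List.cons_eq_cons.mp h).1
  · intro v _ v' _ hne
    rw [Function.onFun, disjoint_left]
    rintro _ ⟨a, -, rfl⟩ ⟨b, -, h⟩
    exact hne (List.cons_eq_cons.mp h).2.symm

theorem biUnion_leftExt_layer (hfac : Factorial L) (k : ℕ) :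
    ⋃ v ∈ layer L k, leftExt L v = layer L (k + 1) := by
  ext z
  rw [mem_biUnion_leftExt]
  cases z with
  | nil => simp [layer]
  | cons a v =>
    simp only [layer, mem_ofPred_eq, List.tail, List.length_cons, ne_eq, reduceCtorEq,
      not_false_eq_true, true_and, Nat.add_right_cancel_iff]
    exact ⟨fun h => ⟨h.1, h.2.2⟩,
      fun h => ⟨h.1, hfac.mem_of_suffix (List.suffix_cons a v) h.1, h.2⟩⟩

theorem biUnion_leftExt_avoiding (hfac : Factorial L) (k : ℕ) :
    ⋃ v ∈ layer (avoiding L w) k, leftExt L v =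
      layer (prefixOnly L w) (k + 1) ∪ layer (avoiding L w) (k + 1) := by
  ext z
  rw [mem_biUnion_leftExt]
  cases z with
  | nil => simp [layer]
  | cons a v =>
    simp only [layer, prefixOnly, avoiding, mem_union, mem_ofPred_eq, List.tail,
      List.length_cons, ne_eq, reduceCtorEq, not_false_eq_true, true_and,
      Nat.add_right_cancel_iff]
    rw [occSet_eq_empty_iff_cons (a := a), subset_singleton_iff_eq]
    constructor
    · rintro ⟨hz, ⟨-, h | h⟩, hlen⟩
      exacts [Or.inr ⟨⟨hz, h⟩, hlen⟩, Or.inl ⟨⟨hz, h⟩, hlen⟩]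
    · have := hfac.mem_of_suffix (List.suffix_cons a v)
      rintro (⟨⟨hz, h⟩, hlen⟩ | ⟨⟨hz, h⟩, hlen⟩)
      exacts [⟨hz, ⟨this hz, Or.inr h⟩, hlen⟩, ⟨hz, ⟨this hz, Or.inl h⟩, hlen⟩]

theorem biUnion_rightExt_prefixOnly (hfac : Factorial L) {k : ℕ} (hk : w.length ≤ k) :
    ⋃ u ∈ layer (prefixOnly L w) k, rightExt L u =
      layer (prefixOnly L w) (k + 1) ∪ layer (completeReturns L w) (k + 1) := by
  ext z
  rw [mem_biUnion_rightExt]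
  simp only [layer, mem_union, mem_ofPred_eq, List.length_dropLast]
  constructor
  · rintro ⟨hz, hne, hd, hdlen⟩
    have hzlen : z.length = k + 1 := by
      have := List.length_pos_of_ne_nil hne
      omega
    rcases (dropLast_mem_prefixOnly_iff hfac hz (by omega)).mp hd with h | h
    exacts [Or.inl ⟨h, hzlen⟩, Or.inr ⟨h, hzlen⟩]
  · intro h
    have hz : z ∈ L := by rcases h with ⟨h, -⟩ | ⟨h, -⟩; exacts [h.1, h.1]
    have hzlen : z.length = k + 1 := by rcases h with ⟨-, h⟩ | ⟨-, h⟩ <;> exact h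
    refine ⟨hz, List.ne_nil_of_length_pos (by omega), ?_, by omega⟩
    exact (dropLast_mem_prefixOnly_iff hfac hz (by omega)).mpr (h.imp And.left And.left)

def IsNeutral (L : Set (List A)) (v : List A) : Prop :=
  (ecount L v : ℤ) = lcount L v + rcount L v - 1

theorem ecount_eq_sum_rcount [Fintype A] (L : Set (List A)) (v : List A) :
    ecount L v = ∑ a, rcount L (a :: v) := by
  classical
  simp only [ecount, rcount, ncard_eq_toFinset_card', toFinset_ofPred, Finset.card_filter,
    Fintype.sum_prod_type]
  rfl

theorem finsum_rcount_cons_sub_one [Fintype A] (hfac : Factorial L) (hext : Extendable L)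
    {v : List A} (hv : v ∈ L) (hneut : IsNeutral L v) :
    ∑ᶠ a ∈ {a | a :: v ∈ L}, (rcount L (a :: v) - 1) = rcount L v - 1 := by
  classical
  have hsum : ∑ a, rcount L (a :: v) = ∑ a ∈ {a | a :: v ∈ L}.toFinset, rcount L (a :: v) :=
    (Finset.sum_subset (Finset.subset_univ _) fun a _ ha =>
      hfac.rcount_eq_zero (by simpa using ha)).symm
  have hsplit : ∑ a ∈ {a | a :: v ∈ L}.toFinset, rcount L (a :: v) =
      ∑ a ∈ {a | a :: v ∈ L}.toFinset, (rcount L (a :: v) - 1) + lcount L v := by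
    rw [lcount, ncard_eq_toFinset_card', Finset.card_eq_sum_ones, ← Finset.sum_add_distrib]
    exact Finset.sum_congr rfl fun a ha =>
      (Nat.sub_add_cancel (hext.one_le_rcount hfac (by simpa using ha))).symm
  have hr := hext.one_le_rcount hfac hv
  rw [IsNeutral, ecount_eq_sum_rcount, hsum, hsplit] at hneut
  rw [← coe_toFinset {a | a :: v ∈ L}, finsum_mem_coe_finset]
  omega

variable {m : ℕ}

theorem finsum_layer_succ [Fintype A] (hfac : Factorial L) (hext : Extendable L)
    (hneut : ∀ v ∈ L, m ≤ v.length → IsNeutral L v) {k : ℕ} (hk : m ≤ k) :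
    ∑ᶠ v ∈ layer L (k + 1), (rcount L v - 1) = ∑ᶠ v ∈ layer L k, (rcount L v - 1) := by
  rw [← biUnion_leftExt_layer hfac, finsum_mem_biUnion_leftExt (layer_finite _ _)]
  exact finsum_mem_congr rfl fun v hv =>
    finsum_rcount_cons_sub_one hfac hext hv.1 (hneut v hv.1 (hv.2 ▸ hk))

theorem finsum_layer_eq [Fintype A] (hfac : Factorial L) (hext : Extendable L)
    (hneut : ∀ v ∈ L, m ≤ v.length → IsNeutral L v) {k : ℕ} (hk : m ≤ k) :
    ∑ᶠ v ∈ layer L k, (rcount L v - 1) = ∑ᶠ v ∈ layer L m, (rcount L v - 1) := by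
  induction k, hk using Nat.le_induction with
  | base => rfl
  | succ k hk ih => rw [finsum_layer_succ hfac hext hneut hk, ih]

theorem finsum_layer_avoiding [Fintype A] (hfac : Factorial L) (hext : Extendable L)
    (hneut : ∀ v ∈ L, m ≤ v.length → IsNeutral L v) {k : ℕ} (hk : m ≤ k) :
    ∑ᶠ v ∈ layer (avoiding L w) k, (rcount L v - 1) =
      ∑ᶠ u ∈ layer (prefixOnly L w) (k + 1), (rcount L u - 1) +
        ∑ᶠ v ∈ layer (avoiding L w) (k + 1), (rcount L v - 1) := by
  rw [← finsum_mem_union (disjoint_prefixOnly_avoiding.mono (layer_subset _ _) (layer_subset _ _))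
    (layer_finite _ _) (layer_finite _ _), ← biUnion_leftExt_avoiding hfac,
    finsum_mem_biUnion_leftExt (layer_finite _ _)]
  exact finsum_mem_congr rfl fun v hv =>
    (finsum_rcount_cons_sub_one hfac hext hv.1.1 (hneut v hv.1.1 (hv.2 ▸ hk))).symm

noncomputable def returnPotential (L : Set (List A)) (w : List A) (k : ℕ) : ℕ :=
  ∑ᶠ u ∈ layer (prefixOnly L w) k, rcount L u +
    ∑ᶠ v ∈ layer (avoiding L w) k, (rcount L v - 1) +
      {z ∈ completeReturns L w | z.length ≤ k}.ncard

theorem returnPotential_succ [Fintype A] (hfac : Factorial L) (hext : Extendable L)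
    (hneut : ∀ v ∈ L, m ≤ v.length → IsNeutral L v) (hm : m ≤ w.length) {k : ℕ}
    (hk : w.length ≤ k) : returnPotential L w (k + 1) = returnPotential L w k := by
  have hchildren : ∑ᶠ u ∈ layer (prefixOnly L w) k, rcount L u =
      (layer (prefixOnly L w) (k + 1)).ncard + (layer (completeReturns L w) (k + 1)).ncard := by
    rw [← ncard_biUnion_rightExt (layer_finite _ _), biUnion_rightExt_prefixOnly hfac hk,
      ncard_union_eq (disjoint_prefixOnly_completeReturns.mono (layer_subset _ _)
        (layer_subset _ _)) (layer_finite _ _) (layer_finite _ _)]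
  have hweights := finsum_layer_avoiding (w := w) hfac hext hneut (hm.trans hk)
  have hreturns : {z ∈ completeReturns L w | z.length ≤ k + 1}.ncard =
      {z ∈ completeReturns L w | z.length ≤ k}.ncard +
        (layer (completeReturns L w) (k + 1)).ncard := by
    rw [← ncard_union_eq _ ((List.finite_length_le A k).subset fun _ hz => hz.2)
      (layer_finite _ _)]
    · congr 1
      ext z
      simp only [layer, mem_union, mem_ofPred_eq, Nat.le_succ_iff, and_or_left]
    · exact disjoint_left.mpr fun z hz hz' => by have := hz.2; have := hz'.2; omega
  have hsplit : ∑ᶠ u ∈ layer (prefixOnly L w) (k + 1), rcount L u =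
      ∑ᶠ u ∈ layer (prefixOnly L w) (k + 1), (rcount L u - 1) +
        (layer (prefixOnly L w) (k + 1)).ncard := by
    rw [← finsum_one, ← finsum_mem_add_distrib (layer_finite _ _)]
    exact finsum_mem_congr rfl fun u hu =>
      (Nat.sub_add_cancel (hext.one_le_rcount hfac hu.1.1)).symm
  unfold returnPotential
  omega

theorem returnPotential_eq [Fintype A] (hfac : Factorial L) (hext : Extendable L)
    (hneut : ∀ v ∈ L, m ≤ v.length → IsNeutral L v) (hm : m ≤ w.length) {k : ℕ}
    (hk : w.length ≤ k) : returnPotential L w k = returnPotential L w w.length := by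
  induction k, hk using Nat.le_induction with
  | base => rfl
  | succ k hk ih => rw [returnPotential_succ hfac hext hneut hm hk, ih]

theorem layer_prefixOnly_length (hw : w ∈ L) : layer (prefixOnly L w) w.length = {w} := by
  ext u
  refine ⟨fun hu => ((prefix_of_mem_prefixOnly hu.1).eq_of_length hu.2.symm).symm, ?_⟩
  rintro rfl
  exact ⟨self_mem_prefixOnly hw, rfl⟩

theorem layer_length_eq_insert_avoiding (hw : w ∈ L) :
    layer L w.length = insert w (layer (avoiding L w) w.length) := by
  ext v
  simp only [layer, avoiding, mem_insert_iff, mem_ofPred_eq]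
  constructor
  · rintro ⟨hv, hlen⟩
    rcases subset_singleton_iff_eq.mp (occSet_subset_zero_of_length_le hlen.le) with h | h
    · exact Or.inr ⟨⟨hv, h⟩, hlen⟩
    · exact Or.inl ((prefix_of_mem_prefixOnly ⟨hv, h⟩).eq_of_length hlen.symm).symm
  · rintro (rfl | ⟨⟨hv, -⟩, hlen⟩)
    exacts [⟨hw, rfl⟩, ⟨hv, hlen⟩]

theorem returnPotential_length [Finite A] (hfac : Factorial L) (hext : Extendable L)
    (hw : w ∈ L) :
    returnPotential L w w.length = 1 + ∑ᶠ v ∈ layer L w.length, (rcount L v - 1) := by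
  have hwS : w ∉ layer (avoiding L w) w.length := fun h =>
    disjoint_prefixOnly_avoiding.notMem_of_mem_left (self_mem_prefixOnly hw) h.1
  have hCR : {z ∈ completeReturns L w | z.length ≤ w.length} = ∅ :=
    eq_empty_of_forall_notMem fun z hz => by
      have := (isCompleteReturn_iff.mp hz.1).2.1
      have := hz.2
      omega
  have hr := hext.one_le_rcount hfac hw
  rw [returnPotential, layer_prefixOnly_length hw, finsum_mem_singleton, hCR, ncard_empty,
    layer_length_eq_insert_avoiding hw, finsum_mem_insert _ hwS (layer_finite _ _)]
  omega

theorem finite_of_bounded_ncard_truncations [Finite A] {S : Set (List A)} {n N : ℕ}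
    (h : ∀ k, n ≤ k → {z ∈ S | z.length ≤ k}.ncard ≤ N) : S.Finite := by
  by_contra hS
  obtain ⟨t, hts, ht, htcard⟩ := Infinite.exists_subset_ncard_eq hS (N + 1)
  obtain ⟨k, hk⟩ := (ht.image List.length).bddAbove
  have hsub : t ⊆ {z ∈ S | z.length ≤ max k n} := fun z hz =>
    ⟨hts hz, (hk ⟨z, hz, rfl⟩).trans (le_max_left _ _)⟩
  have := ncard_le_ncard hsub ((List.finite_length_le A _).subset fun _ hz => hz.2)
  have := h _ (le_max_right k n)
  omega

theorem completeReturns_finite [Fintype A] (hfac : Factorial L) (hext : Extendable L)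
    (hneut : ∀ v ∈ L, m ≤ v.length → IsNeutral L v) (hm : m ≤ w.length) :
    (completeReturns L w).Finite :=
  finite_of_bounded_ncard_truncations (N := returnPotential L w w.length) fun k hk => by
    rw [← returnPotential_eq hfac hext hneut hm hk, returnPotential]
    exact le_add_self

theorem exists_completeReturn_of_append (hfac : Factorial L) {u : List A}
    (hu : u ∈ prefixOnly L w) {t : List A} (ht : u ++ t ∈ L) (hut : u ++ t ∉ prefixOnly L w) :
    ∃ z ∈ completeReturns L w, u.length < z.length := by
  induction t using List.reverseRecOn with
  | nil => exact absurd (by simpa using hu) hut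
  | append_singleton t b ih =>
    rw [← List.append_assoc] at ht hut
    by_cases hx : u ++ t ∈ prefixOnly L w
    · have hlen : w.length < (u ++ t ++ [b]).length := by
        have := (prefix_of_mem_prefixOnly hu).length_le
        simp only [List.length_append, List.length_singleton]
        omega
      have hz := (dropLast_mem_prefixOnly_iff hfac ht hlen).mp (by simpa using hx)
      exact ⟨_, hz.resolve_left hut, by simp⟩
    · exact ih (hfac.mem_of_prefix (List.prefix_append _ _) ht) hx

theorem length_le_of_mem_prefixOnly (hfac : Factorial L)
    (hirr : ∀ u ∈ L, ∀ v ∈ L, ∃ s : List A, u ++ s ++ v ∈ L) (hw : w ∈ L) {K : ℕ}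
    (hK : ∀ z ∈ completeReturns L w, z.length ≤ K) :
    ∀ u ∈ prefixOnly L w, u.length ≤ K := by
  intro u hu
  by_contra hlt
  obtain ⟨s, hs⟩ := hirr u hu.1 w hw
  have hreturn : u.length + s.length ∈ occSet w (u ++ (s ++ w)) :=
    ⟨by simp; omega, by rw [← List.append_assoc, List.drop_left' (by simp)]⟩
  have hnot : u ++ (s ++ w) ∉ prefixOnly L w := fun h => by
    rw [h.2, mem_singleton_iff] at hreturn
    omega
  obtain ⟨z, hz, hlen⟩ := exists_completeReturn_of_append hfac hu (by simpa using hs) hnot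
  have := hK z hz
  omega

theorem exists_drop_mem_prefixOnly (hfac : Factorial L) {x : List A} (hx : x ∈ L)
    (hocc : (occSet w x).Nonempty) :
    ∃ j ∈ occSet w x, x.drop j ∈ prefixOnly L w := by
  obtain ⟨j, hj, hmax⟩ := exists_max_image _ id (occSet_finite w x) hocc
  have hjx : j ≤ x.length := (Nat.le_add_right _ _).trans hj.1
  refine ⟨j, hj, hfac.mem_of_suffix (List.drop_suffix j x) hx, ?_⟩
  ext i
  rw [mem_occSet_drop hjx, mem_singleton_iff]
  refine ⟨fun hi => by have := hmax _ hi; simp only [id] at this; omega, ?_⟩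
  rintro rfl
  simpa using hj

theorem length_lt_of_mem_avoiding (hfac : Factorial L)
    (hirr : ∀ u ∈ L, ∀ v ∈ L, ∃ s : List A, u ++ s ++ v ∈ L) (hw : w ∈ L) {K : ℕ}
    (hK : ∀ u ∈ prefixOnly L w, u.length ≤ K) :
    ∀ v ∈ avoiding L w, v.length < K := by
  intro v hv
  obtain ⟨s, hs⟩ := hirr w hw v hv.1
  have hv_eq : (w ++ s ++ v).drop (w.length + s.length) = v := List.drop_left' (by simp)
  obtain ⟨j, hjocc, hj⟩ := exists_drop_mem_prefixOnly (w := w) hfac hs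
    ⟨0, zero_mem_occSet_iff.mpr (by rw [List.append_assoc]; exact List.prefix_append _ _)⟩
  have hjv : j < w.length + s.length := by
    by_contra hle
    have hocc : j - (w.length + s.length) ∈ occSet w v := by
      rwa [← hv_eq, mem_occSet_drop (by simp), Nat.add_sub_cancel' (by omega)]
    simp [hv.2] at hocc
  have := hK _ hj
  simp only [List.length_drop, List.length_append] at this
  omega

theorem ncard_completeReturns [Fintype A] (hfac : Factorial L) (hext : Extendable L)
    (hirr : ∀ u ∈ L, ∀ v ∈ L, ∃ s : List A, u ++ s ++ v ∈ L)
    (hneut : ∀ v ∈ L, m ≤ v.length → IsNeutral L v) (hw : w ∈ L) (hm : m ≤ w.length) :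
    (completeReturns L w).ncard = 1 + ∑ᶠ v ∈ layer L w.length, (rcount L v - 1) := by
  obtain ⟨K, hK⟩ := ((completeReturns_finite hfac hext hneut hm).image List.length).bddAbove
  have hCR : ∀ z ∈ completeReturns L w, z.length ≤ max K w.length := fun z hz =>
    (hK ⟨z, hz, rfl⟩).trans (le_max_left _ _)
  have hP := length_le_of_mem_prefixOnly hfac hirr hw hCR
  have hS := length_lt_of_mem_avoiding hfac hirr hw hP
  have hPempty : layer (prefixOnly L w) (max K w.length + 1) = ∅ :=
    eq_empty_of_forall_notMem fun u hu => by have := hP u hu.1; have := hu.2; omega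
  have hSempty : layer (avoiding L w) (max K w.length + 1) = ∅ :=
    eq_empty_of_forall_notMem fun v hv => by have := hS v hv.1; have := hv.2; omega
  have hCRall : {z ∈ completeReturns L w | z.length ≤ max K w.length + 1} =
      completeReturns L w :=
    sep_eq_self_iff_mem_true.mpr fun z hz => (hCR z hz).trans (Nat.le_succ _)
  rw [← returnPotential_length hfac hext hw,
    ← returnPotential_eq hfac hext hneut hm (k := max K w.length + 1) (by omega),
    returnPotential, hPempty, hSempty, hCRall, finsum_mem_empty, finsum_mem_empty]
  simp

end

theorem stmt15 {A : Type*} [Fintype A] (L : Set (List A))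
    (hfac : Factorial L) (hext : Extendable L)
    (hirr : ∀ u ∈ L, ∀ v ∈ L, ∃ s : List A, u ++ s ++ v ∈ L)
    (m : ℕ)
    (hneut : ∀ w ∈ L, m ≤ w.length →
      (ecount L w : ℤ) = lcount L w + rcount L w - 1)
    (w : List A) (hw : w ∈ L) (hwlen : m ≤ w.length) :
    (retWords L w).Finite ∧
      (Set.ncard (retWords L w) : ℤ)
        = 1 + ∑ᶠ v ∈ {v : List A | v ∈ L ∧ v.length = m},
            ((rcount L v : ℤ) - 1) := by
  have hinj : Function.Injective (w ++ · : List A → List A) := List.append_right_injective w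
  have hret : retWords L w = (w ++ ·) ⁻¹' completeReturns L w := rfl
  refine ⟨hret ▸ (completeReturns_finite hfac hext hneut hwlen).preimage hinj.injOn, ?_⟩
  have hrange : completeReturns L w ⊆ range (w ++ ·) := fun _ hz => hz.2.1
  rw [hret, ncard_preimage_of_injective_subset_range hinj hrange,
    ncard_completeReturns hfac hext hirr hneut hw hwlen, finsum_layer_eq hfac hext hneut hwlen,
    Nat.cast_add, Nat.cast_one, Nat.cast_finsum_mem (layer_finite L m)]
  congr 1
  exact finsum_mem_congr rfl fun v hv => by
    rw [Nat.cast_sub (hext.one_le_rcount hfac hv.1), Nat.cast_one]
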